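/- arXiv:1904.12272 — 2 statements merged into one kernel-verified Lean document; each statement's English description precedes it below -/
import Mathlib

section
/- Let φ ∈ ℝ and let τ_p, τ_s ∈ ℝ satisfy f_0·(τ_p − τ_s) ∉ ℤ. Then for all positive integers M and N, |(1/(M·N)) · ⟨Ξ_{M,N}(φ,τ_p), Ξ_{M,N}(φ,τ_s)⟩| ≤ 1/(N·|sin(π·f_0·(τ_p − τ_s))|). In particular, sup over M of |(1/(M·N)) · ⟨Ξ_{M,N}(φ,τ_p), Ξ_{M,N}(φ,τ_s)⟩| tends to 0 as N → ∞. (This is the case of Theorem 1 where two paths have the same angle but different delays.) -/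
/-- The beam-squint matrix Ξ_{M,N}(φ,τ) with entries
exp(−i·m·(1 + n·f0/fc)·φ) · exp(−i·2π·n·f0·τ). -/
noncomputable def Xi (f0 fc : ℝ) (M N : ℕ) (φ τ : ℝ) : Matrix (Fin M) (Fin N) ℂ :=
  Matrix.of fun m n =>
    Complex.exp (-Complex.I * ((m : ℕ) : ℂ) * (1 + ((n : ℕ) : ℂ) * (f0 : ℂ) / (fc : ℂ)) * (φ : ℂ)) *
    Complex.exp (-Complex.I * (2 * (Real.pi : ℂ) * ((n : ℕ) : ℂ) * (f0 : ℂ) * (τ : ℂ)))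

/-- Frobenius inner product ⟨A, B⟩ = Σ_{m,n} conj(A_{m,n})·B_{m,n}. -/
noncomputable def frobInner (M N : ℕ) (A B : Matrix (Fin M) (Fin N) ℂ) : ℂ :=
  ∑ m, ∑ n, (starRingEnd ℂ) (A m n) * B m n


/-!
For equal angles the array-phase factors cancel in `conj Ξ(φ,τp) * Ξ(φ,τs)`, leaving the
subcarrier phase `zⁿ` with `z = exp(2πi f₀(τp − τs))`, independently of the antenna index.
So the normalized inner product is `(1/N) ∑_{n<N} zⁿ`, and since `z ≠ 1` lies on the unit circle
the geometric sum is bounded by `2 / ‖z − 1‖ = 1 / |sin(π f₀(τp − τs))|`.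
-/

open Complex Filter Topology Finset
open scoped Real

lemma norm_geom_sum_le_of_norm_le_one {𝕜 : Type*} [NormedDivisionRing 𝕜] {z : 𝕜}
    (hz : ‖z‖ ≤ 1) (hz1 : z ≠ 1) (N : ℕ) :
    ‖∑ n ∈ range N, z ^ n‖ ≤ 2 / ‖z - 1‖ := by
  have hpow : ‖z ^ N - 1‖ ≤ 2 :=
    calc ‖z ^ N - 1‖ ≤ ‖z‖ ^ N + ‖(1 : 𝕜)‖ := by rw [← norm_pow]; exact norm_sub_le _ _
      _ ≤ 1 + 1 := by rw [norm_one]; gcongr; exact pow_le_one₀ (norm_nonneg z) hz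
      _ = 2 := one_add_one_eq_two
  rw [geom_sum_eq hz1, norm_div]
  gcongr

lemma Real.sin_pi_mul_ne_zero {x : ℝ} (hx : ∀ k : ℤ, x ≠ k) : Real.sin (π * x) ≠ 0 := by
  rw [Ne, Real.sin_eq_zero_iff]
  rintro ⟨k, hk⟩
  exact hx k (mul_left_cancel₀ Real.pi_ne_zero (by linarith)).symm

lemma norm_exp_two_pi_mul_I_sub_one (x : ℝ) :
    ‖cexp (I * ↑(2 * π * x)) - 1‖ = 2 * |Real.sin (π * x)| := by
  rw [norm_exp_I_mul_ofReal_sub_one, norm_mul, Real.norm_two, Real.norm_eq_abs]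
  congr 3
  ring

lemma conj_Xi_mul_Xi (f0 fc : ℝ) (M N : ℕ) (φ τp τs : ℝ) (m : Fin M) (n : Fin N) :
    starRingEnd ℂ (Xi f0 fc M N φ τp m n) * Xi f0 fc M N φ τs m n =
      cexp (I * ↑(2 * π * (f0 * (τp - τs)))) ^ (n : ℕ) := by
  simp only [Xi, Matrix.of_apply, ← Complex.exp_conj, ← Complex.exp_nat_mul,
    ← Complex.exp_add]
  congr 1
  simp only [map_mul, map_add, map_one, map_div₀, map_neg, Complex.conj_I,
    Complex.conj_ofReal, map_natCast, map_ofNat]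
  push_cast
  ring

lemma frobInner_Xi_Xi (f0 fc : ℝ) (M N : ℕ) (φ τp τs : ℝ) :
    frobInner M N (Xi f0 fc M N φ τp) (Xi f0 fc M N φ τs) =
      M * ∑ n ∈ range N, cexp (I * ↑(2 * π * (f0 * (τp - τs)))) ^ n := by
  simp only [frobInner, conj_Xi_mul_Xi, Fin.sum_univ_eq_sum_range
    (fun n => cexp (I * ↑(2 * π * (f0 * (τp - τs)))) ^ n), sum_const, card_univ,
    Fintype.card_fin, nsmul_eq_mul]

lemma norm_normalized_frobInner_Xi_le (f0 fc : ℝ) (φ τp τs : ℝ)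
    (hsin : Real.sin (π * (f0 * (τp - τs))) ≠ 0) (M N : ℕ) :
    ‖(1 / ((M : ℂ) * (N : ℂ))) * frobInner M N (Xi f0 fc M N φ τp) (Xi f0 fc M N φ τs)‖ ≤
      1 / ((N : ℝ) * |Real.sin (π * (f0 * (τp - τs)))|) := by
  set z := cexp (I * ↑(2 * π * (f0 * (τp - τs))))
  have hz1 : ‖z - 1‖ = 2 * |Real.sin (π * (f0 * (τp - τs)))| :=
    norm_exp_two_pi_mul_I_sub_one _
  have hz : ‖z‖ = 1 := norm_exp_I_mul_ofReal _
  have hz_ne : z ≠ 1 := by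
    rintro hz_eq
    rw [hz_eq, sub_self, norm_zero] at hz1
    exact hsin (abs_eq_zero.mp (by linarith))
  rcases eq_or_ne M 0 with rfl | hM
  · simp only [CharP.cast_eq_zero, zero_mul, div_zero, norm_zero]
    positivity
  rw [frobInner_Xi_Xi, ← mul_assoc, one_div_mul_eq_div,
    div_mul_cancel_left₀ (Nat.cast_ne_zero.mpr hM), norm_mul, norm_inv, Complex.norm_natCast,
    one_div, mul_inv]
  gcongr
  calc ‖∑ n ∈ range N, z ^ n‖ ≤ 2 / ‖z - 1‖ := norm_geom_sum_le_of_norm_le_one hz.le hz_ne N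
    _ = |Real.sin (π * (f0 * (τp - τs)))|⁻¹ := by rw [hz1, div_mul_cancel_left₀ two_ne_zero]

theorem stmt_1_general (f0 fc : ℝ) (φ τp τs : ℝ)
    (h : ∀ k : ℤ, f0 * (τp - τs) ≠ (k : ℝ)) :
    (∀ M N : ℕ, 0 < M → 0 < N →
      ‖(1 / ((M : ℂ) * (N : ℂ))) *
          frobInner M N (Xi f0 fc M N φ τp) (Xi f0 fc M N φ τs)‖ ≤
        1 / ((N : ℝ) * |Real.sin (Real.pi * (f0 * (τp - τs)))|)) ∧
    Filter.Tendsto (fun N : ℕ =>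
      ⨆ M : ℕ, ‖(1 / ((M : ℂ) * (N : ℂ))) *
          frobInner M N (Xi f0 fc M N φ τp) (Xi f0 fc M N φ τs)‖)
      Filter.atTop (nhds 0) := by
  have hbound := norm_normalized_frobInner_Xi_le f0 fc φ τp τs (Real.sin_pi_mul_ne_zero h)
  refine ⟨fun M N _ _ => hbound M N, ?_⟩
  have hlim : Tendsto (fun N : ℕ => 1 / ((N : ℝ) * |Real.sin (π * (f0 * (τp - τs)))|))
      atTop (𝓝 0) :=
    (tendsto_const_div_atTop_nhds_zero_nat _).congr fun N => by rw [div_div, mul_comm]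
  exact squeeze_zero (fun N => Real.iSup_nonneg fun M => norm_nonneg _)
    (fun N => ciSup_le fun M => hbound M N) hlim

/-- same angle, different delays with f0·(τp − τs) ∉ ℤ: the normalized
Frobenius inner product is bounded by 1/(N·|sin(π·f0·(τp − τs))|), and its supremum
over M tends to 0 as N → ∞. -/
theorem stmt_1 (f0 fc : ℝ) (hf0 : 0 < f0) (hfc : 0 < fc) (φ τp τs : ℝ)
    (h : ∀ k : ℤ, f0 * (τp - τs) ≠ (k : ℝ)) :
    (∀ M N : ℕ, 0 < M → 0 < N →
      ‖(1 / ((M : ℂ) * (N : ℂ))) *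
          frobInner M N (Xi f0 fc M N φ τp) (Xi f0 fc M N φ τs)‖ ≤
        1 / ((N : ℝ) * |Real.sin (Real.pi * (f0 * (τp - τs)))|)) ∧
    Filter.Tendsto (fun N : ℕ =>
      ⨆ M : ℕ, ‖(1 / ((M : ℂ) * (N : ℂ))) *
          frobInner M N (Xi f0 fc M N φ τp) (Xi f0 fc M N φ τs)‖)
      Filter.atTop (nhds 0) :=
  stmt_1_general f0 fc φ τp τs h
end

section
/- Let D ∈ ℂ^{m×n}, let G ∈ ℂ^{n×n} be Hermitian positive definite, let λ > 0, and let y ∈ ℂ^m. With A := D^H·D + λ^{−1}·G and x* := A^{−1}·D^H·y, the minimum value of f(x) = Re(x^H·G·x) + λ·‖y − D·x‖₂² satisfies f(x*) = λ·(‖y‖₂² − Re(y^H·D·A^{−1}·D^H·y)). Consequently, minimizing f over x and then over a dictionary parameter is equivalent to minimizing the surrogate objective v = −Re(y^H·D·(D^H·D + λ^{−1}·G)^{−1}·D^H·y) of equation (36). -/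
/-!
With `b = Dᴴ y` and `A = Dᴴ D + λ⁻¹ G`, completing the square gives
`λ⁻¹ f(x) = (x - x*)ᴴ A (x - x*) + ‖y‖² - Re(x*ᴴ b)` whenever `A x* = b`.
Since `A` is positive definite (sum of the positive semidefinite `Dᴴ D` and the positive
definite `λ⁻¹ G`), the first term is nonnegative and vanishes at `x = x*`, and
`x*ᴴ b = conj (yᴴ D x*)`.
-/

open Matrix
open scoped ComplexOrder

section RegularizedLeastSquares

variable {𝕜 m n : Type*} [RCLike 𝕜] [Fintype m] [Fintype n]

theorem re_star_dotProduct_self (w : m → 𝕜) :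
    RCLike.re (star w ⬝ᵥ w) = ∑ i, ‖w i‖ ^ 2 := by
  simp [dotProduct, RCLike.conj_mul]

theorem star_dotProduct_conjTranspose_mulVec (D : Matrix m n 𝕜) (u : n → 𝕜) (v : m → 𝕜) :
    star u ⬝ᵥ Dᴴ *ᵥ v = star (star v ⬝ᵥ D *ᵥ u) := by
  rw [star_dotProduct, star_mulVec, conjTranspose_conjTranspose, dotProduct_mulVec]

theorem star_dotProduct_add_residual_eq {D : Matrix m n 𝕜} {G : Matrix n n 𝕜}
    (hG : G.IsHermitian) {y : m → 𝕜} {x₀ : n → 𝕜} (hx₀ : (Dᴴ * D + G) *ᵥ x₀ = Dᴴ *ᵥ y)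
    (x : n → 𝕜) :
    star x ⬝ᵥ G *ᵥ x + star (y - D *ᵥ x) ⬝ᵥ (y - D *ᵥ x) =
      star (x - x₀) ⬝ᵥ (Dᴴ * D + G) *ᵥ (x - x₀) + star y ⬝ᵥ y - star x₀ ⬝ᵥ Dᴴ *ᵥ y := by
  set A := Dᴴ * D + G
  have hAH : A.IsHermitian := (isHermitian_conjTranspose_mul_self D).add hG
  have hyDx : star x₀ ⬝ᵥ A *ᵥ x = star y ⬝ᵥ D *ᵥ x := by
    rw [dotProduct_mulVec, ← hAH.eq, ← star_mulVec, hx₀, star_mulVec,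
      conjTranspose_conjTranspose, ← dotProduct_mulVec]
  have hDxy : star (D *ᵥ x) ⬝ᵥ y = star x ⬝ᵥ Dᴴ *ᵥ y := by
    rw [star_mulVec, ← dotProduct_mulVec]
  have hDxDx : star (D *ᵥ x) ⬝ᵥ D *ᵥ x = star x ⬝ᵥ (Dᴴ * D) *ᵥ x := by
    rw [star_mulVec, ← dotProduct_mulVec, mulVec_mulVec]
  have hA : star x ⬝ᵥ A *ᵥ x = star x ⬝ᵥ (Dᴴ * D) *ᵥ x + star x ⬝ᵥ G *ᵥ x := by
    rw [add_mulVec, dotProduct_add]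
  simp only [star_sub, sub_dotProduct, dotProduct_sub, mulVec_sub, hDxy, hDxDx, hyDx, hx₀, hA]
  ring

theorem re_star_dotProduct_add_smul_residual_eq {D : Matrix m n 𝕜} {G : Matrix n n 𝕜}
    (hG : G.IsHermitian) {c : ℝ} (hc : c ≠ 0) {y : m → 𝕜} {x₀ : n → 𝕜}
    (hx₀ : (Dᴴ * D + (c : 𝕜)⁻¹ • G) *ᵥ x₀ = Dᴴ *ᵥ y) (x : n → 𝕜) :
    RCLike.re (star x ⬝ᵥ G *ᵥ x) + c * ∑ i, ‖y i - (D *ᵥ x) i‖ ^ 2 =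
      c * RCLike.re (star (x - x₀) ⬝ᵥ (Dᴴ * D + (c : 𝕜)⁻¹ • G) *ᵥ (x - x₀)) +
        c * (∑ i, ‖y i‖ ^ 2 - RCLike.re (star y ⬝ᵥ D *ᵥ x₀)) := by
  have hGc : ((c : 𝕜)⁻¹ • G).IsHermitian :=
    hG.smul (by rw [← RCLike.ofReal_inv]; exact RCLike.conj_ofReal _)
  have hxGx : RCLike.re (star x ⬝ᵥ ((c : 𝕜)⁻¹ • G) *ᵥ x) =
      c⁻¹ * RCLike.re (star x ⬝ᵥ G *ᵥ x) := by
    rw [smul_mulVec, dotProduct_smul, smul_eq_mul, ← RCLike.ofReal_inv, RCLike.re_ofReal_mul]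
  have h := congrArg RCLike.re (star_dotProduct_add_residual_eq hGc hx₀ x)
  simp only [map_add, map_sub, hxGx, star_dotProduct_conjTranspose_mulVec, RCLike.star_def,
    RCLike.conj_re, re_star_dotProduct_self, Pi.sub_apply] at h
  have hcc : c * c⁻¹ = 1 := mul_inv_cancel₀ hc
  linear_combination c * h - RCLike.re (star x ⬝ᵥ G *ᵥ x) * hcc

end RegularizedLeastSquares

/-- with A = D^H·D + λ⁻¹·G and x* = A⁻¹·D^H·y, the minimum value of
f(x) = Re(x^H·G·x) + λ·‖y − D·x‖₂² is
f(x*) = λ·(‖y‖₂² − Re(y^H·D·A⁻¹·D^H·y)), so minimizing f over x is equivalent to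
minimizing the surrogate v = −Re(y^H·D·(D^H·D + λ⁻¹·G)⁻¹·D^H·y). -/
theorem stmt_12 (m n : ℕ) (D : Matrix (Fin m) (Fin n) ℂ)
    (G : Matrix (Fin n) (Fin n) ℂ) (hG : G.PosDef)
    (lam : ℝ) (hlam : 0 < lam) (y : Fin m → ℂ)
    (A : Matrix (Fin n) (Fin n) ℂ) (hA : A = Dᴴ * D + ((lam : ℂ))⁻¹ • G)
    (f : (Fin n → ℂ) → ℝ)
    (hf : ∀ x : Fin n → ℂ, f x =
      (star x ⬝ᵥ G.mulVec x).re + lam * ∑ i, ‖y i - D.mulVec x i‖ ^ 2)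
    (xstar : Fin n → ℂ) (hxstar : xstar = (A⁻¹).mulVec (Dᴴ.mulVec y)) :
    (∀ x : Fin n → ℂ, f xstar ≤ f x) ∧
    f xstar = lam * ((∑ i, ‖y i‖ ^ 2) -
      (star y ⬝ᵥ D.mulVec ((A⁻¹).mulVec (Dᴴ.mulVec y))).re) := by
  have hA_posDef : A.PosDef := hA ▸ PosDef.posSemidef_add (posSemidef_conjTranspose_mul_self D)
    (hG.smul (inv_pos.2 (Complex.zero_lt_real.2 hlam)))
  have hA_xstar : A *ᵥ xstar = Dᴴ *ᵥ y := by
    rw [hxstar, mulVec_mulVec,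
      mul_nonsing_inv A ((isUnit_iff_isUnit_det A).1 hA_posDef.isUnit), one_mulVec]
  have hf_eq : ∀ x, f x = lam * (star (x - xstar) ⬝ᵥ A *ᵥ (x - xstar)).re +
      lam * (∑ i, ‖y i‖ ^ 2 - (star y ⬝ᵥ D *ᵥ xstar).re) := by
    intro x
    subst hA
    rw [hf x]
    exact re_star_dotProduct_add_smul_residual_eq hG.isHermitian hlam.ne' hA_xstar x
  have hf_xstar : f xstar = lam * (∑ i, ‖y i‖ ^ 2 - (star y ⬝ᵥ D *ᵥ xstar).re) := by
    simp [hf_eq xstar]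
  refine ⟨fun x => ?_, hxstar ▸ hf_xstar⟩
  rw [hf_eq x, hf_xstar, le_add_iff_nonneg_left]
  exact mul_nonneg hlam.le (hA_posDef.posSemidef.re_dotProduct_nonneg _)
end
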